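/- In the setting of the previous lemma, suppose m = ∑_{ε ∈ {+,-}^N} m^ε x^ε where m^ε = ∏_{i: ε_i=+} λ_i · ∏_{i: ε_i=-} (1-λ_i) for some λ_1,…,λ_N ∈ [0,1]. Then for every i: φ_m(e_i^+) = ∑_{ε: ε_i=-} m^ε C_i^ε and φ_m(e_i^-) = ∑_{ε: ε_i=+} m^ε C_i^ε, where C_i^ε := a_i + ∑_{j>i, ε_j=+} α_{ij}^ε a_j. -/
import Mathlib


open Finset

/-- Product of `β` over consecutive pairs of a list of indices. -/
def chainProd (β : ℕ → ℕ → ℤ) : List ℕ → ℤ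
  | p :: q :: t => β p q * chainProd β (q :: t)
  | _ => 1

/-- The chain-sum invariant `α_{ij}^ε`: sum over chains `i = i_0 < … < i_k = j`
whose intermediate indices all have sign `-` (encoded as `false`), of
`(-1)^(k+1) ∏ β_{i_x i_{x+1}}`; chains are encoded by the set of intermediate indices. -/
def alphaC (β : ℕ → ℕ → ℤ) (ε : ℕ → Bool) (i j : ℕ) : ℤ :=
  ∑ S ∈ ((Finset.Ioo i j).filter fun k => ε k = false).powerset,
    (-1 : ℤ) ^ S.card * chainProd β (i :: S.sort (· ≤ ·) ++ [j])

/-- `C_i^ε = a_i + ∑_{j>i, ε_j = +} α_{ij}^ε a_j`. -/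
def Cc (N : ℕ) (β : ℕ → ℕ → ℤ) (a : ℕ → ℤ) (ε : ℕ → Bool) (i : ℕ) : ℤ :=
  a i + ∑ j ∈ (Finset.Ioo i N).filter fun j => ε j = true, alphaC β ε i j * a j

/-- `x` is the family `x^ε` defined by downward recursion:
`x^ε_i = -a_i` if `ε_i = +`, and `x^ε_i = -∑_{j>i} β_{ij} x^ε_j` if `ε_i = -`. -/
def IsBSx (N : ℕ) (β : ℕ → ℕ → ℤ) (a : ℕ → ℤ) (x : (ℕ → Bool) → ℕ → ℤ) : Prop :=
  ∀ ε : ℕ → Bool, ∀ i < N,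
    (ε i = true → x ε i = -a i) ∧
    (ε i = false → x ε i = -∑ j ∈ Finset.Ioo i N, β i j * x ε j)

/-- `φ_m(e_i^+) = m_i + a_i`. -/
def phiP (a m : ℕ → ℤ) (i : ℕ) : ℤ := m i + a i

/-- `φ_m(e_i^-) = -m_i - ∑_{j>i} β_{ij} m_j`. -/
def phiM (N : ℕ) (β : ℕ → ℕ → ℤ) (m : ℕ → ℤ) (i : ℕ) : ℤ :=
  -m i - ∑ j ∈ Finset.Ioo i N, β i j * m j

/-- Sign vector attached to a finite set `S` of indices: `+` on `S`, `-` off `S`. -/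
def epsOf (S : Finset ℕ) : ℕ → Bool := fun k => decide (k ∈ S)

/-- The weight `m^ε = ∏_{ε_i = +} λ_i ∏_{ε_i = -} (1 - λ_i)`, for the sign vector `epsOf S`. -/
def wt (N : ℕ) (lam : ℕ → ℝ) (S : Finset ℕ) : ℝ :=
  ∏ i ∈ Finset.range N, if i ∈ S then lam i else 1 - lam i

lemma powerset_min_decomp (g : Finset ℕ → ℤ) (F : Finset ℕ) :
    ∑ S ∈ F.powerset, g S =
      g ∅ + ∑ k ∈ F, ∑ T ∈ (F.filter (fun x => k < x)).powerset, g (insert k T) := by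
  induction F using Finset.strongInduction with
  | _ F IH =>
    rcases F.eq_empty_or_nonempty with rfl | hF
    · simp
    · set k := F.min' hF with hk
      have hkF : k ∈ F := F.min'_mem hF
      set F' := F.erase k with hF'
      have hkF' : k ∉ F' := Finset.notMem_erase _ _
      have hins : F = insert k F' := (Finset.insert_erase hkF).symm
      have hlt : ∀ x ∈ F', k < x := fun x hx =>
        lt_of_le_of_ne (F.min'_le x (Finset.mem_erase.1 hx).2)
          (Ne.symm (Finset.mem_erase.1 hx).1)
      have h1 : F.filter (fun x => k < x) = F' := by
        ext y
        simp only [Finset.mem_filter, hF', Finset.mem_erase]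
        constructor
        · rintro ⟨hy, hky⟩; exact ⟨ne_of_gt hky, hy⟩
        · rintro ⟨hne, hy⟩; exact ⟨hy, lt_of_le_of_ne (F.min'_le y hy) (Ne.symm hne)⟩
      have h2 : ∀ k' ∈ F', F.filter (fun x => k' < x) = F'.filter (fun x => k' < x) := by
        intro k' hk'
        ext y
        simp only [Finset.mem_filter, hF', Finset.mem_erase]
        constructor
        · rintro ⟨hy, hky⟩
          exact ⟨⟨fun h => absurd (h ▸ hky) (not_lt.2 (le_of_lt (hlt k' hk'))), hy⟩, hky⟩
        · rintro ⟨⟨_, hy⟩, hky⟩; exact ⟨hy, hky⟩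
      have hsum : (∑ k' ∈ F, ∑ T ∈ (F.filter (fun x => k' < x)).powerset, g (insert k' T))
          = (∑ T ∈ F'.powerset, g (insert k T)) +
            ∑ k' ∈ F', ∑ T ∈ (F'.filter (fun x => k' < x)).powerset, g (insert k' T) := by
        rw [show (∑ k' ∈ F, ∑ T ∈ (F.filter (fun x => k' < x)).powerset, g (insert k' T))
            = ∑ k' ∈ insert k F', ∑ T ∈ (F.filter (fun x => k' < x)).powerset, g (insert k' T)
            from by rw [← hins]]
        rw [Finset.sum_insert hkF', h1]
        congr 1
        exact Finset.sum_congr rfl fun k' hk' => by rw [h2 k' hk']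
      rw [hsum, hins, Finset.sum_powerset_insert hkF',
        IH F' (by rw [hF']; exact Finset.erase_ssubset hkF)]
      ring

lemma alphaC_rec (β : ℕ → ℕ → ℤ) (ε : ℕ → Bool) {i j : ℕ} (hij : i < j) :
    alphaC β ε i j = β i j -
      ∑ k ∈ (Finset.Ioo i j).filter (fun k => ε k = false), β i k * alphaC β ε k j := by
  unfold alphaC
  rw [powerset_min_decomp]
  have h0 : (-1 : ℤ) ^ (∅ : Finset ℕ).card *
      chainProd β (i :: (∅ : Finset ℕ).sort (· ≤ ·) ++ [j]) = β i j := by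
    simp [chainProd]
  rw [h0]
  have : ∀ k ∈ (Finset.Ioo i j).filter (fun k => ε k = false),
      (∑ T ∈ (((Finset.Ioo i j).filter (fun k => ε k = false)).filter
          (fun x => k < x)).powerset,
        (-1 : ℤ) ^ (insert k T).card * chainProd β (i :: (insert k T).sort (· ≤ ·) ++ [j]))
      = -(β i k * alphaC β ε k j) := by
    intro k hk
    simp only [Finset.mem_filter, Finset.mem_Ioo] at hk
    have hset : ((Finset.Ioo i j).filter (fun k => ε k = false)).filter (fun x => k < x)
        = (Finset.Ioo k j).filter (fun x => ε x = false) := by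
      ext y
      simp only [Finset.mem_filter, Finset.mem_Ioo]
      constructor
      · rintro ⟨⟨⟨_, hyj⟩, hey⟩, hky⟩; exact ⟨⟨hky, hyj⟩, hey⟩
      · rintro ⟨⟨hky, hyj⟩, hey⟩; exact ⟨⟨⟨lt_trans hk.1.1 hky, hyj⟩, hey⟩, hky⟩
    rw [hset]
    unfold alphaC
    rw [Finset.mul_sum, ← Finset.sum_neg_distrib]
    apply Finset.sum_congr rfl
    intro T hT
    simp only [Finset.mem_powerset] at hT
    have hkT : k ∉ T := by
      intro h
      have := (Finset.mem_filter.1 (hT h)).1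
      exact absurd (Finset.mem_Ioo.1 this).1 (lt_irrefl k)
    have hle : ∀ b ∈ T, k ≤ b := fun b hb =>
      le_of_lt (Finset.mem_Ioo.1 (Finset.mem_filter.1 (hT hb)).1).1
    rw [Finset.card_insert_of_notMem hkT, Finset.sort_insert (· ≤ ·) hle hkT]
    have : chainProd β (i :: (k :: T.sort (· ≤ ·)) ++ [j])
        = β i k * chainProd β (k :: T.sort (· ≤ ·) ++ [j]) := rfl
    rw [this, pow_succ]
    ring
  rw [Finset.sum_congr rfl this, Finset.sum_neg_distrib, ← sub_eq_add_neg]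
  rfl

lemma key (N : ℕ) (β : ℕ → ℕ → ℤ) (a : ℕ → ℤ) (x : (ℕ → Bool) → ℕ → ℤ)
    (hx : IsBSx N β a x) (ε : ℕ → Bool) :
    ∀ d i, N - i ≤ d → i < N →
      -∑ j ∈ Finset.Ioo i N, β i j * x ε j
        = ∑ j ∈ (Finset.Ioo i N).filter (fun j => ε j = true), alphaC β ε i j * a j := by
  intro d
  induction d with
  | zero => intro i hd hi; omega
  | succ d IH =>
    intro i hd hi
    have e1 : ∑ j ∈ (Finset.Ioo i N).filter (fun j => ε j = true), β i j * x ε j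
        = ∑ j ∈ (Finset.Ioo i N).filter (fun j => ε j = true), -(β i j * a j) := by
      apply Finset.sum_congr rfl; intro j hj
      rw [Finset.mem_filter] at hj
      rw [(hx ε j (Finset.mem_Ioo.1 hj.1).2).1 hj.2]; ring
    have e2 : ∑ k ∈ (Finset.Ioo i N).filter (fun k => ¬ε k = true), β i k * x ε k
        = ∑ k ∈ (Finset.Ioo i N).filter (fun k => ε k = false),
            ∑ j ∈ (Finset.Ioo k N).filter (fun j => ε j = true),
              β i k * (alphaC β ε k j * a j) := by
      rw [show ((Finset.Ioo i N).filter (fun k => ¬ε k = true))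
          = (Finset.Ioo i N).filter (fun k => ε k = false) from by
        apply Finset.filter_congr; intro k _; simp]
      apply Finset.sum_congr rfl; intro k hk
      rw [Finset.mem_filter, Finset.mem_Ioo] at hk
      have h2 := (hx ε k hk.1.2).2 hk.2
      have h3 : x ε k = ∑ j ∈ (Finset.Ioo k N).filter (fun j => ε j = true),
          alphaC β ε k j * a j := by
        rw [h2]; exact IH k (by omega) hk.1.2
      rw [h3, Finset.mul_sum]
    have e3 : (∑ k ∈ (Finset.Ioo i N).filter (fun k => ε k = false),
          ∑ j ∈ (Finset.Ioo k N).filter (fun j => ε j = true),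
            β i k * (alphaC β ε k j * a j))
        = ∑ j ∈ (Finset.Ioo i N).filter (fun j => ε j = true),
            ∑ k ∈ (Finset.Ioo i j).filter (fun k => ε k = false),
              β i k * (alphaC β ε k j * a j) := by
      apply Finset.sum_comm'
      intro k j
      simp only [Finset.mem_filter, Finset.mem_Ioo]
      constructor
      · rintro ⟨⟨⟨h1, h2⟩, h3⟩, ⟨h4, h5⟩, h6⟩
        exact ⟨⟨⟨h1, h4⟩, h3⟩, ⟨by omega, h5⟩, h6⟩
      · rintro ⟨⟨⟨h1, h2⟩, h3⟩, ⟨h4, h5⟩, h6⟩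
        exact ⟨⟨⟨h1, by omega⟩, h3⟩, ⟨h2, h5⟩, h6⟩
    rw [← Finset.sum_filter_add_sum_filter_not (Finset.Ioo i N) (fun j => ε j = true)
        (fun j => β i j * x ε j), e1, e2, e3, neg_add, ← Finset.sum_neg_distrib,
      ← Finset.sum_neg_distrib, ← Finset.sum_add_distrib]
    apply Finset.sum_congr rfl
    intro j hj
    rw [Finset.mem_filter, Finset.mem_Ioo] at hj
    rw [alphaC_rec β ε hj.1.1, sub_mul, Finset.sum_mul]
    simp only [mul_assoc]
    ring

lemma wt_sum (N : ℕ) (lam : ℕ → ℝ) :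
    ∑ S ∈ (Finset.range N).powerset, wt N lam S = 1 := by
  have h1 : (∏ i ∈ Finset.range N, (lam i + (1 - lam i))) = 1 := by
    apply Finset.prod_eq_one; intro i _; ring
  rw [Finset.prod_add] at h1
  rw [← h1]
  apply Finset.sum_congr rfl
  intro S hS
  rw [Finset.mem_powerset] at hS
  unfold wt
  conv_lhs => rw [show (Finset.range N) = S ∪ (Finset.range N \ S) from
    (Finset.union_sdiff_of_subset hS).symm]
  rw [Finset.prod_union Finset.disjoint_sdiff]
  congr 1
  · exact Finset.prod_congr rfl fun i hi => if_pos hi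
  · exact Finset.prod_congr rfl fun i hi => if_neg (Finset.mem_sdiff.1 hi).2

/-- If `m = ∑_ε m^ε x^ε` with `m^ε = ∏_{ε_i=+} λ_i ∏_{ε_i=-} (1-λ_i)`, then
`φ_m(e_i^+) = ∑_{ε : ε_i=-} m^ε C_i^ε` and `φ_m(e_i^-) = ∑_{ε : ε_i=+} m^ε C_i^ε`. -/
theorem stmt4 (N : ℕ) (hN : 1 ≤ N) (β : ℕ → ℕ → ℤ) (a : ℕ → ℤ)
    (x : (ℕ → Bool) → ℕ → ℤ) (hx : IsBSx N β a x)
    (lam : ℕ → ℝ) (hlam : ∀ i < N, lam i ∈ Set.Icc (0 : ℝ) 1)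
    (m : ℕ → ℝ)
    (hm : ∀ i < N, m i =
      ∑ S ∈ (Finset.range N).powerset, wt N lam S * (x (epsOf S) i : ℝ))
    (i : ℕ) (hi : i < N) :
    (m i + (a i : ℝ) =
      ∑ S ∈ (Finset.range N).powerset.filter fun S => i ∉ S,
        wt N lam S * (Cc N β a (epsOf S) i : ℝ)) ∧
    (-m i - ∑ j ∈ Finset.Ioo i N, (β i j : ℝ) * m j =
      ∑ S ∈ (Finset.range N).powerset.filter fun S => i ∈ S,
        wt N lam S * (Cc N β a (epsOf S) i : ℝ)) := by
  have hwt := wt_sum N lam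
  have hCc1 : ∀ S : Finset ℕ, i ∉ S →
      x (epsOf S) i + a i = Cc N β a (epsOf S) i := by
    intro S hiS
    have hε : epsOf S i = false := by simp [epsOf, hiS]
    have h2 := (hx (epsOf S) i hi).2 hε
    have h3 := key N β a x hx (epsOf S) (N - i) i le_rfl hi
    rw [h2, h3]
    unfold Cc
    ring
  have hCc2 : ∀ S : Finset ℕ, i ∈ S →
      -x (epsOf S) i - ∑ j ∈ Finset.Ioo i N, β i j * x (epsOf S) j
        = Cc N β a (epsOf S) i := by
    intro S hiS
    have hε : epsOf S i = true := by simp [epsOf, hiS]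
    have h3 := key N β a x hx (epsOf S) (N - i) i le_rfl hi
    rw [(hx (epsOf S) i hi).1 hε, neg_neg, sub_eq_add_neg, h3]
    rfl
  constructor
  · rw [hm i hi]
    have ha : (a i : ℝ) = ∑ S ∈ (Finset.range N).powerset, wt N lam S * (a i : ℝ) := by
      rw [← Finset.sum_mul, hwt, one_mul]
    rw [ha, ← Finset.sum_add_distrib,
      ← Finset.sum_filter_add_sum_filter_not ((Finset.range N).powerset) (fun S => i ∉ S)]
    have hz : ∑ S ∈ (Finset.range N).powerset.filter (fun S => ¬i ∉ S),
        (wt N lam S * (x (epsOf S) i : ℝ) + wt N lam S * (a i : ℝ)) = 0 := by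
      apply Finset.sum_eq_zero
      intro S hS
      rw [Finset.mem_filter] at hS
      have hiS : i ∈ S := not_not.1 hS.2
      have hε : epsOf S i = true := by simp [epsOf, hiS]
      rw [(hx (epsOf S) i hi).1 hε]
      push_cast
      ring
    rw [hz, add_zero]
    apply Finset.sum_congr rfl
    intro S hS
    rw [Finset.mem_filter] at hS
    rw [← hCc1 S hS.2]
    push_cast
    ring
  · rw [hm i hi]
    have e : (∑ j ∈ Finset.Ioo i N, (β i j : ℝ) * m j)
        = ∑ S ∈ (Finset.range N).powerset, wt N lam S *
            ((∑ j ∈ Finset.Ioo i N, β i j * x (epsOf S) j : ℤ) : ℝ) := by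
      calc (∑ j ∈ Finset.Ioo i N, (β i j : ℝ) * m j)
          = ∑ j ∈ Finset.Ioo i N, ∑ S ∈ (Finset.range N).powerset,
              wt N lam S * ((β i j : ℝ) * (x (epsOf S) j : ℝ)) := by
            apply Finset.sum_congr rfl
            intro j hj
            rw [hm j (Finset.mem_Ioo.1 hj).2, Finset.mul_sum]
            apply Finset.sum_congr rfl
            intro S _
            ring
        _ = ∑ S ∈ (Finset.range N).powerset, ∑ j ∈ Finset.Ioo i N,
              wt N lam S * ((β i j : ℝ) * (x (epsOf S) j : ℝ)) := Finset.sum_comm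
        _ = _ := by
            apply Finset.sum_congr rfl
            intro S _
            push_cast
            rw [Finset.mul_sum]
    rw [e]
    have e2 : (-∑ S ∈ (Finset.range N).powerset, wt N lam S * (x (epsOf S) i : ℝ))
          - ∑ S ∈ (Finset.range N).powerset, wt N lam S *
              ((∑ j ∈ Finset.Ioo i N, β i j * x (epsOf S) j : ℤ) : ℝ)
        = ∑ S ∈ (Finset.range N).powerset, wt N lam S *
            ((-x (epsOf S) i - ∑ j ∈ Finset.Ioo i N, β i j * x (epsOf S) j : ℤ) : ℝ) := by
      rw [← Finset.sum_neg_distrib, ← Finset.sum_sub_distrib]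
      apply Finset.sum_congr rfl
      intro S _
      push_cast
      ring
    rw [e2,
      ← Finset.sum_filter_add_sum_filter_not ((Finset.range N).powerset) (fun S => i ∈ S)]
    have hz : ∑ S ∈ (Finset.range N).powerset.filter (fun S => ¬i ∈ S),
        wt N lam S * ((-x (epsOf S) i
          - ∑ j ∈ Finset.Ioo i N, β i j * x (epsOf S) j : ℤ) : ℝ) = 0 := by
      apply Finset.sum_eq_zero
      intro S hS
      rw [Finset.mem_filter] at hS
      have hε : epsOf S i = false := by simp [epsOf, hS.2]
      rw [(hx (epsOf S) i hi).2 hε]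
      simp
    rw [hz, add_zero]
    apply Finset.sum_congr rfl
    intro S hS
    rw [Finset.mem_filter] at hS
    rw [hCc2 S hS.2]
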